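/- Let x_1, ..., x_n ∈ ℝ^p (p ≥ 2), let w_1, ..., w_n > 0 be positive weights, let 0 < q_1 < ... < q_d < p be a signature, and let the weighted sample covariance S_w = Σ_{i=1}^n w_i x_i x_iᵀ have eigenvalues ℓ_1 ≥ ... ≥ ℓ_p with orthonormal eigenvectors v_1, ..., v_p. Define S_k* = span(v_1, ..., v_{q_k}). Then for every flag S_1 ⊆ ... ⊆ S_d of ℝ^p with dim S_k = q_k, one has Σ_{i=1}^n w_i ‖x_i − (1/d) Σ_{k=1}^d Π_{S_k} x_i‖_2² ≥ Σ_{i=1}^n w_i ‖x_i − (1/d) Σ_{k=1}^d Π_{S_k*} x_i‖_2²; that is, the weighted least-squares flag criterion is minimized by the eigenflag of S_w. -/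

import Mathlib

open Matrix Finset

/-- The squared Frobenius norm of a real matrix. -/
noncomputable def frobSq {p n : ℕ} (M : Matrix (Fin p) (Fin n) ℝ) : ℝ :=
  Matrix.trace (Mᵀ * M)

/-- `P k`, for `k = 1, …, d`, are the orthogonal projection matrices onto a flag
`S_1 ⊆ ⋯ ⊆ S_d` of subspaces of `ℝ^p` with `dim S_k = q k`: each `P k` is a symmetric
idempotent of rank `q k`, and nestedness is `P l * P k = P k` for `k ≤ l`. -/
def IsProjFlag (p d : ℕ) (q : ℕ → ℕ) (P : ℕ → Matrix (Fin p) (Fin p) ℝ) : Prop :=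
  (∀ k, 1 ≤ k → k ≤ d → (P k).IsSymm) ∧
  (∀ k, 1 ≤ k → k ≤ d → P k * P k = P k) ∧
  (∀ k, 1 ≤ k → k ≤ d → (P k).rank = q k) ∧
  (∀ k l, 1 ≤ k → k ≤ l → l ≤ d → P l * P k = P k)

/-- Outer product `u_j u_jᵀ` of the `j`-th column of `U`. -/
noncomputable def colOuter {p : ℕ} (U : Matrix (Fin p) (Fin p) ℝ) (j : Fin p) :
    Matrix (Fin p) (Fin p) ℝ :=
  Matrix.vecMulVec (fun i => U i j) (fun i => U i j)

/-- Orthogonal projection matrix onto the span of the first `m` columns of `V`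
(for `V` with orthonormal columns, this is `∑_{j ≤ m} v_j v_jᵀ`). -/
noncomputable def leadProj {p : ℕ} (V : Matrix (Fin p) (Fin p) ℝ) (m : ℕ) :
    Matrix (Fin p) (Fin p) ℝ :=
  ∑ j ∈ Finset.univ.filter (fun j : Fin p => (j : ℕ) < m), colOuter V j

/-! ### Auxiliary lemmas -/

lemma trace_eq_rank_of_idem {p : ℕ} (M : Matrix (Fin p) (Fin p) ℝ)
    (h : M * M = M) : M.trace = (M.rank : ℝ) := by
  have hf : M.mulVecLin ∘ₗ M.mulVecLin = M.mulVecLin := by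
    rw [← Matrix.mulVecLin_mul, h]
  obtain ⟨S, hS⟩ := (LinearMap.isProj_iff_isIdempotentElem M.mulVecLin).mpr hf
  have hrange : LinearMap.range M.mulVecLin = S := by
    apply le_antisymm
    · rintro y ⟨v, rfl⟩; exact hS.map_mem v
    · intro y hy; exact ⟨y, hS.map_id y hy⟩
  have ht := hS.trace
  rw [LinearMap.trace_eq_matrix_trace ℝ (Pi.basisFun ℝ (Fin p)),
    LinearMap.toMatrix_eq_toMatrix', ← Matrix.toLin'_apply' M,
    LinearMap.toMatrix'_toLin'] at ht
  rw [Matrix.rank, hrange]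
  exact ht

lemma sqnorm_eq_trace {p : ℕ} (M : Matrix (Fin p) (Fin p) ℝ) (v : Fin p → ℝ) :
    ∑ a, (M.mulVec v a)^2 = ((Mᵀ * M) * Matrix.vecMulVec v v).trace := by
  simp only [Matrix.trace, Matrix.diag, Matrix.mul_apply, Matrix.transpose_apply,
    Matrix.vecMulVec_apply, Matrix.mulVec, dotProduct, sq,
    Finset.sum_mul, Finset.mul_sum]
  rw [Finset.sum_comm]
  apply Finset.sum_congr rfl; intro a _
  rw [Finset.sum_comm]
  apply Finset.sum_congr rfl; intro b _
  apply Finset.sum_congr rfl; intro c _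
  ring

lemma sum_min_Icc (d : ℕ) (t : ℕ → ℝ) :
    ∑ k ∈ Finset.Icc 1 d, ∑ l ∈ Finset.Icc 1 d, t (min k l)
      = ∑ k ∈ Finset.Icc 1 d, (2*((d:ℝ) - k) + 1) * t k := by
  induction d with
  | zero => simp
  | succ d ih =>
    have hins : Finset.Icc 1 (d+1) = insert (d+1) (Finset.Icc 1 d) := by
      ext m; simp; omega
    have hnot : d + 1 ∉ Finset.Icc 1 d := by simp
    rw [hins, Finset.sum_insert hnot, Finset.sum_insert hnot]
    have h1 : ∀ l ∈ Finset.Icc 1 d, t (min (d+1) l) = t l := by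
      intro l hl; simp at hl; rw [min_eq_right (by omega)]
    have h2 : ∀ k ∈ Finset.Icc 1 d,
        (t (min k (d+1)) + ∑ l ∈ Finset.Icc 1 d, t (min k l))
          = t k + ∑ l ∈ Finset.Icc 1 d, t (min k l) := by
      intro k hk; simp at hk; rw [min_eq_left (by omega)]
    rw [Finset.sum_congr rfl h1]
    simp only [Finset.sum_insert hnot]
    rw [Finset.sum_congr rfl h2, Finset.sum_add_distrib, ih, min_self]
    have h3 : ∀ k ∈ Finset.Icc 1 d,
        (2*(((d:ℝ)+1) - k) + 1) * t k = (2*((d:ℝ) - k) + 1) * t k + 2 * t k := by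
      intro k _; push_cast; ring
    push_cast
    rw [Finset.sum_congr rfl h3, Finset.sum_add_distrib,
      show ∑ k ∈ Finset.Icc 1 d, 2 * t k = 2 * (Finset.Icc 1 d).sum t from Finset.mul_sum ..|>.symm]
    ring

lemma diag_nonneg_of_symm_idem {p : ℕ} (B : Matrix (Fin p) (Fin p) ℝ)
    (hs : Bᵀ = B) (hi : B * B = B) (j : Fin p) : 0 ≤ B j j := by
  have : B j j = ∑ a, (B a j)^2 := by
    conv_lhs => rw [← hi]
    rw [Matrix.mul_apply]
    apply Finset.sum_congr rfl; intro a _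
    have : B j a = B a j := Matrix.IsSymm.apply hs a j
    rw [this]; ring
  rw [this]
  exact Finset.sum_nonneg fun a _ => sq_nonneg _

lemma card_filter_lt_fin {p m : ℕ} (hm : m ≤ p) :
    (Finset.univ.filter (fun j : Fin p => (j : ℕ) < m)).card = m := by
  have : Finset.univ.filter (fun j : Fin p => (j : ℕ) < m)
      = Finset.map (Fin.castLEEmb hm) Finset.univ := by
    ext j
    constructor
    · intro h
      have hj : (j : ℕ) < m := (Finset.mem_filter.mp h).2
      exact Finset.mem_map.mpr ⟨⟨j, hj⟩, Finset.mem_univ _, by ext; simp⟩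
    · intro h
      obtain ⟨a, -, rfl⟩ := Finset.mem_map.mp h
      simpa using a.isLt
  rw [this, Finset.card_map, Finset.card_univ, Fintype.card_fin]

lemma kyfan_scalar {p : ℕ} (ℓ : Fin p → ℝ) (hsort : ∀ i j : Fin p, i ≤ j → ℓ j ≤ ℓ i)
    (t : Fin p → ℝ) (h0 : ∀ j, 0 ≤ t j) (h1 : ∀ j, t j ≤ 1)
    (m : ℕ) (hm : m < p) (hsum : ∑ j, t j = m) :
    ∑ j, ℓ j * t j ≤ ∑ j ∈ Finset.univ.filter (fun j : Fin p => (j : ℕ) < m), ℓ j := by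
  set qq : Fin p := ⟨m, hm⟩ with hqq
  set s := Finset.univ.filter (fun j : Fin p => (j : ℕ) < m) with hs
  rw [← Finset.sum_filter_add_sum_filter_not Finset.univ (fun j : Fin p => (j : ℕ) < m)
    (fun j => ℓ j * t j)]
  have key : ∑ j ∈ Finset.univ.filter (fun j : Fin p => ¬ (j : ℕ) < m), ℓ j * t j
      ≤ ∑ j ∈ s, ℓ j * (1 - t j) := by
    calc ∑ j ∈ Finset.univ.filter (fun j : Fin p => ¬ (j : ℕ) < m), ℓ j * t j
        ≤ ∑ j ∈ Finset.univ.filter (fun j : Fin p => ¬ (j : ℕ) < m), ℓ qq * t j := by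
          apply Finset.sum_le_sum
          intro j hj
          simp only [Finset.mem_filter, not_lt] at hj
          exact mul_le_mul_of_nonneg_right (hsort qq j (by simpa [hqq, Fin.le_def] using hj.2))
            (h0 j)
      _ = ℓ qq * ∑ j ∈ Finset.univ.filter (fun j : Fin p => ¬ (j : ℕ) < m), t j := by
          rw [Finset.mul_sum]
      _ = ℓ qq * ∑ j ∈ s, (1 - t j) := by
          congr 1
          have hsplit : ∑ j ∈ s, t j + ∑ j ∈ Finset.univ.filter (fun j : Fin p => ¬ (j:ℕ) < m), t j
              = (m : ℝ) := by
            rw [Finset.sum_filter_add_sum_filter_not]; exact hsum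
          have hcard : ∑ j ∈ s, (1 - t j) = (m : ℝ) - ∑ j ∈ s, t j := by
            rw [Finset.sum_sub_distrib, Finset.sum_const, card_filter_lt_fin hm.le]
            simp
          rw [hcard]; linarith
      _ ≤ ∑ j ∈ s, ℓ j * (1 - t j) := by
          rw [Finset.mul_sum]
          apply Finset.sum_le_sum
          intro j hj
          simp only [hs, Finset.mem_filter] at hj
          have : qq ≤ j → False := by intro h; exact absurd hj.2 (by simp [hqq, Fin.le_def] at h ⊢; omega)
          have hle : j ≤ qq := le_of_lt (lt_of_not_ge fun h => this h)
          exact mul_le_mul_of_nonneg_right (hsort j qq hle) (by linarith [h1 j])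
  calc ∑ j ∈ s, ℓ j * t j + ∑ j ∈ Finset.univ.filter (fun j : Fin p => ¬ (j:ℕ) < m), ℓ j * t j
      ≤ ∑ j ∈ s, ℓ j * t j + ∑ j ∈ s, ℓ j * (1 - t j) := by linarith
    _ = ∑ j ∈ s, ℓ j := by rw [← Finset.sum_add_distrib]; apply Finset.sum_congr rfl; intro j _; ring

lemma obj_eq {p n d : ℕ} (x : Fin n → Fin p → ℝ) (w : Fin n → ℝ)
    (S : Matrix (Fin p) (Fin p) ℝ)
    (hS : ∑ i, w i • Matrix.vecMulVec (x i) (x i) = S)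
    (R : ℕ → Matrix (Fin p) (Fin p) ℝ)
    (hsymm : ∀ k, 1 ≤ k → k ≤ d → (R k).IsSymm)
    (hmul : ∀ k l, 1 ≤ k → k ≤ l → l ≤ d → R l * R k = R k) :
    ∑ i, w i * ∑ a, (x i a - ((1:ℝ)/d) * (∑ k ∈ Finset.Icc 1 d, (R k).mulVec (x i)) a)^2
      = S.trace + ∑ k ∈ Finset.Icc 1 d,
          (((1:ℝ)/d)^2 * (2*((d:ℝ) - k) + 1) - 2*((1:ℝ)/d)) * (R k * S).trace := by
  set c : ℝ := (1:ℝ)/d with hc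
  set T : Matrix (Fin p) (Fin p) ℝ := ∑ k ∈ Finset.Icc 1 d, R k with hT
  set M : Matrix (Fin p) (Fin p) ℝ := (1 : Matrix (Fin p) (Fin p) ℝ) - c • T with hM
  have hTsymm : Tᵀ = T := by
    rw [hT, Matrix.transpose_sum]
    apply Finset.sum_congr rfl
    intro k hk
    simp only [Finset.mem_Icc] at hk
    exact hsymm k hk.1 hk.2
  have hMt : Mᵀ = M := by
    rw [hM, Matrix.transpose_sub, Matrix.transpose_one, Matrix.transpose_smul, hTsymm]
  have hvec : ∀ i a, x i a - c * (∑ k ∈ Finset.Icc 1 d, (R k).mulVec (x i)) a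
      = M.mulVec (x i) a := by
    intro i a
    rw [hM, Matrix.sub_mulVec, Matrix.one_mulVec, Matrix.smul_mulVec]
    have hTv : (T *ᵥ x i) a = (∑ k ∈ Finset.Icc 1 d, (R k).mulVec (x i)) a := by
      rw [hT]
      simp only [Matrix.mulVec, dotProduct, Finset.sum_apply, Matrix.sum_apply,
        Finset.sum_mul]
      rw [Finset.sum_comm]
    simp [hTv]
  have step1 : ∑ i, w i * ∑ a, (x i a - c * (∑ k ∈ Finset.Icc 1 d, (R k).mulVec (x i)) a)^2
      = ((Mᵀ * M) * S).trace := by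
    have : ∀ i, ∑ a, (x i a - c * (∑ k ∈ Finset.Icc 1 d, (R k).mulVec (x i)) a)^2
        = ((Mᵀ * M) * Matrix.vecMulVec (x i) (x i)).trace := by
      intro i
      rw [← sqnorm_eq_trace]
      exact Finset.sum_congr rfl fun a _ => by rw [hvec i a]
    simp_rw [this]
    rw [← hS, Matrix.mul_sum]
    rw [Matrix.trace_sum]
    apply Finset.sum_congr rfl
    intro i _
    rw [Matrix.mul_smul, Matrix.trace_smul, smul_eq_mul]
  have hMM : Mᵀ * M = 1 - (2*c) • T + (c^2) • (T*T) := by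
    rw [hMt, hM, sub_mul, mul_sub, mul_sub, one_mul, mul_one, Matrix.smul_mul,
      Matrix.mul_smul, one_mul, Matrix.mul_smul, smul_smul]
    module
  have hRmin : ∀ k ∈ Finset.Icc 1 d, ∀ l ∈ Finset.Icc 1 d, R k * R l = R (min k l) := by
    intro k hk l hl
    simp only [Finset.mem_Icc] at hk hl
    rcases le_total l k with h | h
    · rw [min_eq_right h]; exact hmul l k hl.1 h hk.2
    · rw [min_eq_left h]
      have hk' := hsymm k hk.1 (h.trans hl.2)
      have hl' := hsymm l hl.1 hl.2
      conv_lhs => rw [← hk', ← hl']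
      rw [← Matrix.transpose_mul, hmul k l hk.1 h hl.2]
      exact hk'
  have hTT : (T * T) * S = ∑ k ∈ Finset.Icc 1 d, ∑ l ∈ Finset.Icc 1 d,
      (R (min k l) * S) := by
    rw [hT, Finset.sum_mul_sum]
    rw [Finset.sum_mul]
    apply Finset.sum_congr rfl
    intro k hk
    rw [Finset.sum_mul]
    apply Finset.sum_congr rfl
    intro l hl
    rw [hRmin k hk l hl]
  have step2 : ((Mᵀ * M) * S).trace
      = S.trace - (2*c) * (T * S).trace + c^2 * ∑ k ∈ Finset.Icc 1 d,
          (2*((d:ℝ) - k) + 1) * (R k * S).trace := by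
    rw [hMM, Matrix.add_mul, Matrix.sub_mul, Matrix.one_mul, Matrix.smul_mul,
      Matrix.smul_mul, Matrix.trace_add, Matrix.trace_sub, Matrix.trace_smul,
      Matrix.trace_smul, smul_eq_mul, smul_eq_mul, hTT]
    congr 1
    rw [Matrix.trace_sum]
    simp_rw [Matrix.trace_sum]
    rw [sum_min_Icc d (fun k => (R k * S).trace)]
  have step3 : (T * S).trace = ∑ k ∈ Finset.Icc 1 d, (R k * S).trace := by
    rw [hT, Matrix.sum_mul, Matrix.trace_sum]
  rw [step1, step2, step3, Finset.mul_sum, Finset.mul_sum]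
  have hcomb : ∑ i ∈ Finset.Icc 1 d, c ^ 2 * ((2 * ((d:ℝ) - i) + 1) * (R i * S).trace)
      - ∑ i ∈ Finset.Icc 1 d, 2 * c * (R i * S).trace
      = ∑ k ∈ Finset.Icc 1 d, (c ^ 2 * (2 * ((d:ℝ) - k) + 1) - 2 * c) * (R k * S).trace := by
    rw [← Finset.sum_sub_distrib]
    exact Finset.sum_congr rfl fun k _ => by ring
  linarith [hcomb]

lemma vecMulVec_mul_vecMulVec {p : ℕ} (a b u v : Fin p → ℝ) :
    Matrix.vecMulVec a b * Matrix.vecMulVec u v = (b ⬝ᵥ u) • Matrix.vecMulVec a v := by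
  ext i k
  simp only [Matrix.mul_apply, Matrix.vecMulVec_apply, Matrix.smul_apply, smul_eq_mul,
    dotProduct, Finset.sum_mul, Finset.mul_sum]
  apply Finset.sum_congr rfl; intro j _; ring

lemma trace_vecMulVec_mul {p : ℕ} (u v : Fin p → ℝ) (M : Matrix (Fin p) (Fin p) ℝ) :
    (Matrix.vecMulVec u v * M).trace = v ⬝ᵥ (M *ᵥ u) := by
  simp only [Matrix.trace, Matrix.diag, Matrix.mul_apply, Matrix.vecMulVec_apply,
    dotProduct, Matrix.mulVec, Finset.mul_sum]
  rw [Finset.sum_comm]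
  apply Finset.sum_congr rfl; intro a _
  apply Finset.sum_congr rfl; intro b _
  ring

section OrthCols
variable {p : ℕ} (V : Matrix (Fin p) (Fin p) ℝ)

lemma col_dot_col (hV : Vᵀ * V = 1) (j j' : Fin p) :
    (fun i => V i j) ⬝ᵥ (fun i => V i j') = if j = j' then (1:ℝ) else 0 := by
  have h := congrFun (congrFun hV j) j'
  simp only [Matrix.mul_apply, Matrix.transpose_apply, Matrix.one_apply] at h
  simpa [dotProduct] using h

lemma colOuter_mul_colOuter (hV : Vᵀ * V = 1) (j j' : Fin p) :
    colOuter V j * colOuter V j' = if j = j' then colOuter V j else 0 := by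
  rw [colOuter, colOuter, vecMulVec_mul_vecMulVec, col_dot_col V hV]
  by_cases h : j = j'
  · subst h; simp [colOuter]
  · simp [h]

lemma leadProj_mul_leadProj (hV : Vᵀ * V = 1) {m m' : ℕ} (hmm : m' ≤ m) :
    leadProj V m * leadProj V m' = leadProj V m' := by
  rw [leadProj, leadProj, Finset.sum_mul_sum]
  have h1 : ∀ j ∈ Finset.univ.filter (fun j : Fin p => (j:ℕ) < m),
      ∑ j' ∈ Finset.univ.filter (fun j : Fin p => (j:ℕ) < m'), colOuter V j * colOuter V j'
      = ∑ j' ∈ Finset.univ.filter (fun j : Fin p => (j:ℕ) < m'),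
          (if j = j' then colOuter V j else 0) := by
    intro j _
    exact Finset.sum_congr rfl fun j' _ => colOuter_mul_colOuter V hV j j'
  rw [Finset.sum_congr rfl h1, Finset.sum_comm]
  apply Finset.sum_congr rfl
  intro j' hj'
  simp only [Finset.mem_filter, Finset.mem_univ, true_and] at hj'
  have : ∀ j ∈ Finset.univ.filter (fun j : Fin p => (j:ℕ) < m),
      (if j = j' then colOuter V j else 0) = (if j = j' then colOuter V j' else 0) := by
    intro j _; split <;> simp_all
  rw [Finset.sum_congr rfl this, Finset.sum_ite_eq' (Finset.univ.filter (fun j : Fin p => (j:ℕ) < m)) j' (fun _ => colOuter V j')]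
  simp only [Finset.mem_filter, Finset.mem_univ, true_and]
  rw [if_pos (lt_of_lt_of_le hj' hmm)]

lemma leadProj_isSymm (m : ℕ) : (leadProj V m).IsSymm := by
  unfold Matrix.IsSymm
  rw [leadProj, Matrix.transpose_sum]
  apply Finset.sum_congr rfl
  intro j _
  ext i k
  simp [colOuter, Matrix.vecMulVec_apply, mul_comm]

lemma trace_colOuter_mul (hV : Vᵀ * V = 1) (ℓ : Fin p → ℝ) (j : Fin p) :
    (colOuter V j * (V * Matrix.diagonal ℓ * Vᵀ)).trace = ℓ j := by
  rw [colOuter, trace_vecMulVec_mul]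
  have h2 : Vᵀ *ᵥ (fun i => V i j) = fun a => if a = j then (1:ℝ) else 0 := by
    funext a
    have h := congrFun (congrFun hV a) j
    simp only [Matrix.mul_apply, Matrix.transpose_apply, Matrix.one_apply] at h
    simpa [Matrix.mulVec, dotProduct, Matrix.transpose_apply] using h
  have h3 : Matrix.diagonal ℓ *ᵥ (fun a => if a = j then (1:ℝ) else 0)
      = fun a => if a = j then ℓ j else 0 := by
    funext a
    simp only [Matrix.mulVec, dotProduct, Matrix.diagonal_apply, mul_ite, mul_one,
      mul_zero, ite_mul, zero_mul]
    rw [Finset.sum_ite_eq' Finset.univ j (fun b => if a = b then ℓ a else 0)]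
    simp only [Finset.mem_univ, if_true]
    split
    · rename_i h; subst h; simp
    · rfl
  have h4 : V *ᵥ (fun a => if a = j then ℓ j else 0) = fun i => V i j * ℓ j := by
    funext i
    simp only [Matrix.mulVec, dotProduct, mul_ite, mul_zero]
    rw [Finset.sum_ite_eq' Finset.univ j (fun a => V i a * ℓ j)]
    simp
  have hmv : (V * Matrix.diagonal ℓ * Vᵀ) *ᵥ (fun i => V i j) = fun i => V i j * ℓ j := by
    rw [← Matrix.mulVec_mulVec, ← Matrix.mulVec_mulVec, h2, h3, h4]
  rw [hmv]
  have hdot := col_dot_col V hV j j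
  simp only [eq_self_iff_true, if_true] at hdot
  simp only [dotProduct] at hdot ⊢
  rw [show ∑ i, V i j * (V i j * ℓ j) = (∑ i, V i j * V i j) * ℓ j from by
    rw [Finset.sum_mul]; exact Finset.sum_congr rfl fun i _ => by ring, hdot, one_mul]

lemma trace_leadProj_mul (hV : Vᵀ * V = 1) (ℓ : Fin p → ℝ) (m : ℕ) :
    (leadProj V m * (V * Matrix.diagonal ℓ * Vᵀ)).trace
      = ∑ j ∈ Finset.univ.filter (fun j : Fin p => (j : ℕ) < m), ℓ j := by
  rw [leadProj, Matrix.sum_mul, Matrix.trace_sum]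
  exact Finset.sum_congr rfl fun j _ => trace_colOuter_mul V hV ℓ j

lemma trace_proj_le (hV : Vᵀ * V = 1) (ℓ : Fin p → ℝ)
    (hsort : ∀ i j : Fin p, i ≤ j → ℓ j ≤ ℓ i)
    (P : Matrix (Fin p) (Fin p) ℝ) (hs : Pᵀ = P) (hi : P * P = P)
    (mq : ℕ) (hrank : P.rank = mq) (hqp : mq < p) :
    (P * (V * Matrix.diagonal ℓ * Vᵀ)).trace
      ≤ ∑ j ∈ Finset.univ.filter (fun j : Fin p => (j : ℕ) < mq), ℓ j := by
  have hVVt : V * Vᵀ = 1 := mul_eq_one_comm.mp hV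
  set B : Matrix (Fin p) (Fin p) ℝ := Vᵀ * P * V with hB
  have hBs : Bᵀ = B := by
    rw [hB, Matrix.transpose_mul, Matrix.transpose_mul, Matrix.transpose_transpose, hs,
      Matrix.mul_assoc]
  have hBi : B * B = B := by
    rw [hB]
    calc Vᵀ * P * V * (Vᵀ * P * V) = Vᵀ * P * (V * Vᵀ) * P * V := by
          simp only [Matrix.mul_assoc]
      _ = Vᵀ * (P * P) * V := by rw [hVVt]; simp only [Matrix.mul_assoc, Matrix.one_mul]
      _ = Vᵀ * P * V := by rw [hi, Matrix.mul_assoc]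
  have hCs : ((1 : Matrix (Fin p) (Fin p) ℝ) - B)ᵀ = 1 - B := by
    rw [Matrix.transpose_sub, Matrix.transpose_one, hBs]
  have hCi : ((1 : Matrix (Fin p) (Fin p) ℝ) - B) * (1 - B) = 1 - B := by
    rw [Matrix.mul_sub, Matrix.sub_mul, Matrix.sub_mul, Matrix.one_mul, Matrix.mul_one, hBi]
    simp
  have h0 : ∀ j, 0 ≤ B j j := diag_nonneg_of_symm_idem B hBs hBi
  have h1 : ∀ j, B j j ≤ 1 := by
    intro j
    have := diag_nonneg_of_symm_idem _ hCs hCi j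
    simp only [Matrix.sub_apply, Matrix.one_apply_eq] at this
    linarith
  have htrB : ∑ j, B j j = (mq : ℝ) := by
    have h1 : B.trace = (P * (V * Vᵀ)).trace := by
      rw [hB, Matrix.trace_mul_comm, ← Matrix.mul_assoc, Matrix.trace_mul_comm]
    rw [show ∑ j, B j j = B.trace from rfl, h1, hVVt, Matrix.mul_one,
      trace_eq_rank_of_idem P hi, hrank]
  have htr : (P * (V * Matrix.diagonal ℓ * Vᵀ)).trace = ∑ j, ℓ j * B j j := by
    have hcyc : (P * (V * Matrix.diagonal ℓ * Vᵀ)).trace = (B * Matrix.diagonal ℓ).trace := by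
      rw [hB]
      calc (P * (V * Matrix.diagonal ℓ * Vᵀ)).trace
          = ((P * (V * Matrix.diagonal ℓ)) * Vᵀ).trace := by
            simp only [Matrix.mul_assoc]
        _ = (Vᵀ * (P * (V * Matrix.diagonal ℓ))).trace := by rw [Matrix.trace_mul_comm]
        _ = (Vᵀ * P * V * Matrix.diagonal ℓ).trace := by simp only [Matrix.mul_assoc]
    rw [hcyc, Matrix.trace]
    apply Finset.sum_congr rfl
    intro j _
    rw [Matrix.diag_apply, Matrix.mul_diagonal]
    ring
  rw [htr]
  exact kyfan_scalar ℓ hsort (fun j => B j j) h0 h1 mq hqp htrB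

end OrthCols

/-- Reweighted nested PCA: the weighted least-squares flag criterion
`∑ᵢ wᵢ ‖xᵢ − (1/d) ∑ₖ Π_{S_k} xᵢ‖₂²` is minimized over all flags of signature
`(p, q_{1:d})` by the eigenflag of the weighted covariance `S_w = ∑ᵢ wᵢ xᵢ xᵢᵀ`. -/
theorem reweighted_nested_pca
    {p n d : ℕ} (hp : 2 ≤ p) (hn : 1 ≤ n) (hd : 1 ≤ d)
    (q : ℕ → ℕ) (hq1 : 0 < q 1)
    (hmono : ∀ k, 1 ≤ k → k < d → q k < q (k + 1)) (hqd : q d < p)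
    (x : Fin n → Fin p → ℝ) (w : Fin n → ℝ) (hw : ∀ i, 0 < w i)
    (ℓ : Fin p → ℝ) (V : Matrix (Fin p) (Fin p) ℝ)
    (hV : Vᵀ * V = 1)
    (hsort : ∀ i j : Fin p, i ≤ j → ℓ j ≤ ℓ i)
    (hSw : ∑ i, w i • Matrix.vecMulVec (x i) (x i) = V * Matrix.diagonal ℓ * Vᵀ)
    (P : ℕ → Matrix (Fin p) (Fin p) ℝ)
    (hP : IsProjFlag p d q P) :
    ∑ i, w i * ∑ a, (x i a - ((1 : ℝ) / d) *
        (∑ k ∈ Finset.Icc 1 d, (P k).mulVec (x i)) a) ^ 2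
      ≥ ∑ i, w i * ∑ a, (x i a - ((1 : ℝ) / d) *
          (∑ k ∈ Finset.Icc 1 d, (leadProj V (q k)).mulVec (x i)) a) ^ 2 := by
  obtain ⟨hPsymm, hPidem, hPrank, hPnest⟩ := hP
  set S : Matrix (Fin p) (Fin p) ℝ := V * Matrix.diagonal ℓ * Vᵀ with hSdef
  have hqmono : ∀ l, l ≤ d → ∀ k, 1 ≤ k → k ≤ l → q k ≤ q l := by
    intro l
    induction l with
    | zero => intro _ k hk hkl; omega
    | succ m ih =>
      intro hld k hk hkl
      rcases Nat.lt_or_ge k (m+1) with h | h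
      · have h1 : q k ≤ q m := ih (by omega) k hk (by omega)
        have h2 : q m < q (m+1) := hmono m (by omega) (by omega)
        omega
      · have : k = m + 1 := by omega
        subst this; exact le_refl _
  set Q : ℕ → Matrix (Fin p) (Fin p) ℝ := fun k => leadProj V (q k) with hQ
  have hQsymm : ∀ k, 1 ≤ k → k ≤ d → (Q k).IsSymm := fun k _ _ => leadProj_isSymm V (q k)
  have hQmul : ∀ k l, 1 ≤ k → k ≤ l → l ≤ d → Q l * Q k = Q k := by
    intro k l hk hkl hld
    exact leadProj_mul_leadProj V hV (hqmono l hld k hk hkl)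
  have hPmul : ∀ k l, 1 ≤ k → k ≤ l → l ≤ d → P l * P k = P k := hPnest
  rw [obj_eq x w S hSw P hPsymm hPmul, obj_eq x w S hSw Q hQsymm hQmul]
  have hdpos : (0:ℝ) < d := by exact_mod_cast hd
  apply add_le_add le_rfl
  apply Finset.sum_le_sum
  intro k hk
  simp only [Finset.mem_Icc] at hk
  have hcoeff : ((1:ℝ)/d)^2 * (2*((d:ℝ) - k) + 1) - 2*((1:ℝ)/d) ≤ 0 := by
    have heq : ((1:ℝ)/d)^2 * (2*((d:ℝ) - k) + 1) - 2*((1:ℝ)/d)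
        = (1 - 2*(k:ℝ)) / (d:ℝ)^2 := by
      field_simp
      ring
    rw [heq]
    apply div_nonpos_of_nonpos_of_nonneg
    · have : (1:ℝ) ≤ (k:ℝ) := by exact_mod_cast hk.1
      linarith
    · positivity
  have hqkp : q k < p := lt_of_le_of_lt (hqmono d (le_refl d) k hk.1 hk.2) hqd
  have htQ : (Q k * S).trace = ∑ j ∈ Finset.univ.filter (fun j : Fin p => (j:ℕ) < q k), ℓ j :=
    trace_leadProj_mul V hV ℓ (q k)
  have htP : (P k * S).trace ≤ ∑ j ∈ Finset.univ.filter (fun j : Fin p => (j:ℕ) < q k), ℓ j :=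
    trace_proj_le V hV ℓ hsort (P k) (hPsymm k hk.1 hk.2) (hPidem k hk.1 hk.2) (q k)
      (hPrank k hk.1 hk.2) hqkp
  have : (P k * S).trace ≤ (Q k * S).trace := by rw [htQ]; exact htP
  exact mul_le_mul_of_nonpos_left this hcoeff
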